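/- In the lattice-of-functionals setting, let Y be any subgroup of X and set Y^{⊥ε} = {b ∈ X : χ_ε(a,b) = 1 for all a ∈ Y}. Then for every function f : X → ℂ, |Y^{⊥ε}|^{−1/2} · ∑_{b ∈ Y^{⊥ε}} (Ff)(b) = |Y|^{−1/2} · ∑_{a ∈ Y} f(a). -/

import Mathlib

/-- The canonical integer representative `z` of `u ∈ ℤ/(HH′²)ℤ` with
`−HH′²/2 ≤ z < HH′²/2`, so that the point of `L′` corresponding to `u` is `ε′z = z/H′`. -/
def lift' (H H' : ℕ) (u : ZMod (H * H' ^ 2)) : ℤ :=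
  if (u.val : ℤ) < ((H : ℤ) * (H' : ℤ) ^ 2) / 2 then (u.val : ℤ)
  else (u.val : ℤ) - (H : ℤ) * (H' : ℤ) ^ 2

/-- The rational point `ε′z ∈ L′ ⊆ ℚ ⊆ ℂ` corresponding to `u ∈ ℤ/(HH′²)ℤ`. -/
noncomputable def val' (H H' : ℕ) (u : ZMod (H * H' ^ 2)) : ℂ :=
  (lift' H H' u : ℂ) / (H' : ℂ)

/-- The pairing `χ_ε(a,b) = exp(2πi·ε·∑_{k∈K} a(k)·b(k))` on `X = L′^K`, `ε = 1/H`. -/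
noncomputable def chiEps (H H' : ℕ) (K : Type) [Fintype K]
    (a b : K → ZMod (H * H' ^ 2)) : ℂ :=
  Complex.exp (2 * Real.pi * Complex.I * (H : ℂ)⁻¹ *
    ∑ k, val' H H' (a k) * val' H H' (b k))

/-- `ε₀ = (HH′²)^{−H²/2} = |X|^{−1/2}`. -/
noncomputable def eps0 (H H' : ℕ) (K : Type) [Fintype K] [DecidableEq K]
    [NeZero H] [NeZero H'] : ℂ :=
  (Real.sqrt (Fintype.card (K → ZMod (H * H' ^ 2))) : ℂ)⁻¹

/-- The infinitesimal Fourier transform `(Ff)(b) = ∑_{a∈X} ε₀·χ_ε(a,b)⁻¹·f(a)`. -/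
noncomputable def FtransX (H H' : ℕ) (K : Type) [Fintype K] [DecidableEq K]
    [NeZero H] [NeZero H'] (f : (K → ZMod (H * H' ^ 2)) → ℂ)
    (b : K → ZMod (H * H' ^ 2)) : ℂ :=
  ∑ a : K → ZMod (H * H' ^ 2), eps0 H H' K * (chiEps H H' K a b)⁻¹ * f a


namespace PoissonAux

open Finset

set_option linter.unusedSectionVars false

variable {N : ℕ} [NeZero N] {K : Type} [Fintype K] [DecidableEq K]

/-- The pairing character `b ↦ e(∑ aₖbₖ / N)`. -/
noncomputable def Psi (a : K → ZMod N) : AddChar (K → ZMod N) ℂ :=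
  ZMod.stdAddChar.compAddMonoidHom
    (AddMonoidHom.mk' (fun b => ∑ k, a k * b k)
      (by intro b c; simp [mul_add, Finset.sum_add_distrib]))

lemma Psi_apply (a b : K → ZMod N) : Psi a b = ZMod.stdAddChar (∑ k, a k * b k) := rfl

lemma Psi_ne_zero (a b : K → ZMod N) : Psi a b ≠ 0 := by
  rw [Psi_apply, ZMod.stdAddChar_apply]; exact Circle.coe_ne_zero _

lemma Psi_symm (a b : K → ZMod N) : Psi a b = Psi b a := by
  simp only [Psi_apply]; congr 1; exact Finset.sum_congr rfl fun k _ => mul_comm _ _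

lemma Psi_add_left (a a' b : K → ZMod N) : Psi (a + a') b = Psi a b * Psi a' b := by
  simp only [Psi_apply]
  rw [← AddChar.map_add_eq_mul, ← Finset.sum_add_distrib]
  congr 1
  exact Finset.sum_congr rfl fun k _ => by rw [Pi.add_apply, add_mul]

lemma Psi_zero_left (b : K → ZMod N) : Psi (0 : K → ZMod N) b = 1 := by
  simp [Psi_apply]

lemma Psi_neg_left (a b : K → ZMod N) : Psi (-a) b = (Psi a b)⁻¹ := by
  have h : Psi a b * Psi (-a) b = 1 := by
    rw [← Psi_add_left, add_neg_cancel, Psi_zero_left]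
  exact eq_inv_of_mul_eq_one_right h

lemma Psi_eq_zero_of_forall (a : K → ZMod N) (h : ∀ b, Psi a b = 1) : a = 0 := by
  funext k
  set b0 : K → ZMod N := Pi.single k 1 with hb0
  have hb := h b0
  rw [Psi_apply] at hb
  have hs : (∑ j, a j * b0 j) = a k := by
    simp only [hb0]
    rw [Finset.sum_eq_single k]
    · simp
    · intro j _ hj; simp [Pi.single_apply, hj]
    · simp
  rw [hs] at hb
  show a k = (0 : ZMod N)
  exact ZMod.injective_stdAddChar (hb.trans (ZMod.stdAddChar.map_zero_eq_one).symm)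

lemma Psi_injective : Function.Injective (Psi (N := N) (K := K)) := by
  intro a a' h
  have key : ∀ b, Psi (a + -a') b = 1 := fun b => by
    rw [Psi_add_left, Psi_neg_left, ← h, mul_inv_cancel₀ (Psi_ne_zero a b)]
  have := Psi_eq_zero_of_forall _ key
  linear_combination (norm := abel) this

lemma Psi_surjective : Function.Surjective (Psi (N := N) (K := K)) := by
  have h := (Fintype.bijective_iff_injective_and_card (Psi (N := N) (K := K))).2
    ⟨Psi_injective, (AddChar.card_eq).symm⟩
  exact h.surjective

/-- The ε-orthogonal complement of a subgroup, as a subgroup. -/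
noncomputable def perp (Y : AddSubgroup (K → ZMod N)) : AddSubgroup (K → ZMod N) where
  carrier := {b | ∀ a ∈ Y, Psi a b = 1}
  zero_mem' := fun a _ => (Psi a).map_zero_eq_one
  add_mem' := fun hb hc a ha => by
    rw [(Psi a).map_add_eq_mul, hb a ha, hc a ha, one_mul]
  neg_mem' := fun {b} hb a ha => by
    rw [(Psi a).map_neg_eq_inv, hb a ha, inv_one]

lemma mem_perp {Y : AddSubgroup (K → ZMod N)} {b : K → ZMod N} :
    b ∈ perp Y ↔ ∀ a ∈ Y, Psi a b = 1 := Iff.rfl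

lemma natCard_addChar (Q : Type) [AddCommGroup Q] [Finite Q] :
    Nat.card (AddChar Q ℂ) = Nat.card Q := by
  have : Fintype Q := Fintype.ofFinite Q
  rw [Nat.card_eq_fintype_card, Nat.card_eq_fintype_card, AddChar.card_eq]

lemma card_perp_mul (Y : AddSubgroup (K → ZMod N)) :
    Nat.card (perp Y) * Nat.card Y = Nat.card (K → ZMod N) := by
  classical
  -- equivalence between perp Y and characters of the quotient
  set X := K → ZMod N
  have hFun : ∀ b : perp Y, ∀ a ∈ Y, (AddChar.toAddMonoidHomEquiv (Psi (b : X))) a = 0 := by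
    intro b a ha
    have h1 : Psi (b : X) a = 1 := by rw [Psi_symm]; exact b.2 a ha
    simp [h1]
  let F : perp Y → AddChar (X ⧸ Y) ℂ := fun b =>
    AddChar.toAddMonoidHomEquiv.symm
      (QuotientAddGroup.lift Y (AddChar.toAddMonoidHomEquiv (Psi (b : X))) (hFun b))
  have hF : ∀ (b : perp Y) (a : X), F b (QuotientAddGroup.mk a) = Psi (b : X) a := by
    intro b a
    simp [F]
    rfl
  have hinj : Function.Injective F := by
    intro b b' h
    have : Psi (b : X) = Psi (b' : X) := by
      apply DFunLike.ext
      intro a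
      rw [← hF b a, ← hF b' a, h]
    exact Subtype.ext (Psi_injective this)
  have hsurj : Function.Surjective F := by
    intro φ
    obtain ⟨b, hb⟩ := Psi_surjective (φ.compAddMonoidHom (QuotientAddGroup.mk' Y))
    have hbY : b ∈ perp Y := by
      intro a ha
      rw [Psi_symm, hb]
      simp only [AddChar.compAddMonoidHom_apply, QuotientAddGroup.mk'_apply]
      rw [(QuotientAddGroup.eq_zero_iff a).2 ha, AddChar.map_zero_eq_one]
    refine ⟨⟨b, hbY⟩, ?_⟩
    apply DFunLike.ext
    intro x
    induction x using QuotientAddGroup.induction_on with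
    | H a =>
      rw [hF ⟨b, hbY⟩ a]
      rw [hb]
      simp
  have : Nat.card (perp Y) = Nat.card (X ⧸ Y) := by
    rw [Nat.card_congr (Equiv.ofBijective F ⟨hinj, hsurj⟩), natCard_addChar]
  rw [this, ← AddSubgroup.card_eq_card_quotient_mul_card_addSubgroup Y]



lemma perp_perp (Y : AddSubgroup (K → ZMod N)) : perp (perp Y) = Y := by
  have hle : Y ≤ perp (perp Y) := by
    intro a ha c hc
    rw [Psi_symm]; exact hc a ha
  have h1 := card_perp_mul Y
  have h2 := card_perp_mul (perp Y)
  have hPpos : 0 < Nat.card (perp Y) := Nat.card_pos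
  have hcard : Nat.card (perp (perp Y)) = Nat.card Y := by
    apply Nat.eq_of_mul_eq_mul_right hPpos
    rw [h2, ← h1, mul_comm]
  exact (AddSubgroup.eq_of_le_of_card_ge hle hcard.le).symm

lemma addchar_eq_zero_iff {A : Type} [AddCommGroup A] (ψ : AddChar A ℂ) :
    ψ = 0 ↔ ∀ x, ψ x = 1 := by
  constructor
  · intro h x; rw [h]; rfl
  · intro h; apply DFunLike.ext; intro x; rw [h x]; rfl

lemma sum_perp (B : AddSubgroup (K → ZMod N)) (ψ : AddChar (K → ZMod N) ℂ)
    [DecidablePred (· ∈ B)] :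
    ∑ b ∈ Finset.univ.filter (· ∈ B), ψ b
      = if (∀ b ∈ B, ψ b = 1) then (Nat.card B : ℂ) else 0 := by
  classical
  rw [Finset.sum_subtype (p := (· ∈ B)) (Finset.univ.filter (· ∈ B)) (fun x => by simp) ψ]
  have : (∑ x : {x // x ∈ B}, ψ ↑x) = ∑ x : B, (ψ.compAddMonoidHom B.subtype) x := rfl
  rw [this, AddChar.sum_eq_ite]
  have hiff : (ψ.compAddMonoidHom B.subtype = 0) ↔ ∀ b ∈ B, ψ b = 1 := by
    rw [addchar_eq_zero_iff]
    constructor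
    · intro h b hb; exact h ⟨b, hb⟩
    · intro h x; exact h x.1 x.2
  by_cases hc : ∀ b ∈ B, ψ b = 1
  · rw [if_pos (hiff.2 hc), if_pos hc, Nat.card_eq_fintype_card]
  · rw [if_neg (fun h => hc (hiff.1 h)), if_neg hc]

end PoissonAux

namespace PoissonAux

lemma lift'_cast (H H' : ℕ) [NeZero (H * H' ^ 2)] (u : ZMod (H * H' ^ 2)) :
    ((lift' H H' u : ℤ) : ZMod (H * H' ^ 2)) = u := by
  rw [lift']
  split_ifs
  · simp [ZMod.natCast_val, ZMod.cast_id]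
  · have h0 : (((H : ℤ) * (H' : ℤ) ^ 2 : ℤ) : ZMod (H * H' ^ 2)) = 0 := by
      rw [show ((H : ℤ) * (H' : ℤ) ^ 2 : ℤ) = ((H * H' ^ 2 : ℕ) : ℤ) by push_cast; ring]
      rw [Int.cast_natCast, ZMod.natCast_self]
    rw [Int.cast_sub, h0, sub_zero]
    simp [ZMod.natCast_val, ZMod.cast_id]

lemma chiEps_eq (H H' : ℕ) [NeZero H] [NeZero H'] (K : Type) [Fintype K] [DecidableEq K]
    [NeZero (H * H' ^ 2)] (a b : K → ZMod (H * H' ^ 2)) :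
    chiEps H H' K a b = Psi a b := by
  have hH : (H : ℂ) ≠ 0 := Nat.cast_ne_zero.2 (NeZero.ne H)
  have hH' : (H' : ℂ) ≠ 0 := Nat.cast_ne_zero.2 (NeZero.ne H')
  rw [chiEps, Psi_apply]
  have hsum : (∑ k, a k * b k)
      = ((∑ k, lift' H H' (a k) * lift' H H' (b k) : ℤ) : ZMod (H * H' ^ 2)) := by
    push_cast
    exact (Finset.sum_congr rfl fun k _ => by
      rw [lift'_cast, lift'_cast]).symm
  rw [hsum, ZMod.stdAddChar_coe]
  congr 1
  have h1 : ∀ k, val' H H' (a k) * val' H H' (b k)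
      = ((lift' H H' (a k) * lift' H H' (b k) : ℤ) : ℂ) / (H' : ℂ) ^ 2 := by
    intro k
    rw [val', val', div_mul_div_comm]
    push_cast
    ring
  rw [Finset.sum_congr rfl fun k _ => h1 k, ← Finset.sum_div]
  rw [show (∑ k, ((lift' H H' (a k) * lift' H H' (b k) : ℤ) : ℂ))
      = ((∑ k, lift' H H' (a k) * lift' H H' (b k) : ℤ) : ℂ) by push_cast; ring]
  push_cast
  field_simp

end PoissonAux

open scoped Classical in
/-- Poisson summation formula for Definition 1.3 on the space of functionals:
for every subgroup `Y` of `X = L′^K` with `Y^{⊥ε} = {b : χ_ε(a,b) = 1 ∀ a ∈ Y}` and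
every `f : X → ℂ`, `|Y^{⊥ε}|^{−1/2}·∑_{b ∈ Y^{⊥ε}} (Ff)(b) = |Y|^{−1/2}·∑_{a ∈ Y} f(a)`. -/
theorem poisson_summation_functionals_eps (H H' : ℕ) [NeZero H] [NeZero H']
    (hH : Even H) (hH' : Even H') (K : Type) [Fintype K] [DecidableEq K]
    (hK : Fintype.card K = H ^ 2)
    (Y : AddSubgroup (K → ZMod (H * H' ^ 2))) (f : (K → ZMod (H * H' ^ 2)) → ℂ) :
    (Real.sqrt ((Finset.univ.filter (fun b : K → ZMod (H * H' ^ 2) =>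
          ∀ a ∈ Y, chiEps H H' K a b = 1)).card) : ℂ)⁻¹ *
        ∑ b ∈ Finset.univ.filter (fun b : K → ZMod (H * H' ^ 2) =>
          ∀ a ∈ Y, chiEps H H' K a b = 1), FtransX H H' K f b
      = (Real.sqrt (Nat.card Y) : ℂ)⁻¹ *
          ∑ a ∈ Finset.univ.filter (fun a : K → ZMod (H * H' ^ 2) => a ∈ Y), f a := by
  haveI : NeZero (H * H' ^ 2) := ⟨Nat.mul_ne_zero (NeZero.ne H) (pow_ne_zero 2 (NeZero.ne H'))⟩
  classical
  have hpred : (Finset.univ.filter (fun b : K → ZMod (H * H' ^ 2) =>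
        ∀ a ∈ Y, chiEps H H' K a b = 1))
      = Finset.univ.filter (· ∈ PoissonAux.perp Y) := by
    apply Finset.filter_congr
    intro b _
    constructor
    · intro h a ha; rw [← PoissonAux.chiEps_eq]; exact h a ha
    · intro h a ha; rw [PoissonAux.chiEps_eq]; exact h a ha
  rw [hpred]
  have hfc : (Finset.univ.filter (· ∈ PoissonAux.perp Y)).card = Nat.card (PoissonAux.perp Y) := by
    rw [Nat.card_eq_fintype_card]
    rw [Fintype.card_subtype]
  -- swap the sums
  have hswap : ∑ b ∈ Finset.univ.filter (· ∈ PoissonAux.perp Y), FtransX H H' K f b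
      = ∑ a : K → ZMod (H * H' ^ 2), (eps0 H H' K * f a) *
          ∑ b ∈ Finset.univ.filter (· ∈ PoissonAux.perp Y), PoissonAux.Psi (-a) b := by
    simp only [FtransX]
    rw [Finset.sum_comm]
    apply Finset.sum_congr rfl
    intro a _
    rw [Finset.mul_sum]
    apply Finset.sum_congr rfl
    intro b _
    rw [PoissonAux.chiEps_eq, ← PoissonAux.Psi_neg_left]
    ring
  have hcond : ∀ a : K → ZMod (H * H' ^ 2), (∀ b ∈ PoissonAux.perp Y, PoissonAux.Psi (-a) b = 1) ↔ a ∈ Y := by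
    intro a
    have h1 : (∀ b ∈ PoissonAux.perp Y, PoissonAux.Psi (-a) b = 1) ↔ (-a) ∈ PoissonAux.perp (PoissonAux.perp Y) := by
      constructor
      · intro h c hc; rw [PoissonAux.Psi_symm]; exact h c hc
      · intro h c hc; rw [PoissonAux.Psi_symm]; exact h c hc
    rw [h1, PoissonAux.perp_perp, neg_mem_iff]
  have hsum2 : ∑ b ∈ Finset.univ.filter (· ∈ PoissonAux.perp Y), FtransX H H' K f b
      = eps0 H H' K * (Nat.card (PoissonAux.perp Y) : ℂ) *
          ∑ a ∈ Finset.univ.filter (fun a : K → ZMod (H * H' ^ 2) => a ∈ Y), f a := by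
    rw [hswap]
    have : ∀ a : K → ZMod (H * H' ^ 2), (eps0 H H' K * f a) *
        ∑ b ∈ Finset.univ.filter (· ∈ PoissonAux.perp Y), PoissonAux.Psi (-a) b
        = if a ∈ Y then eps0 H H' K * (Nat.card (PoissonAux.perp Y) : ℂ) * f a else 0 := by
      intro a
      rw [PoissonAux.sum_perp]
      by_cases h : a ∈ Y
      · rw [if_pos ((hcond a).2 h), if_pos h]; ring
      · rw [if_neg (fun hh => h ((hcond a).1 hh)), if_neg h, mul_zero]
    rw [Finset.sum_congr rfl fun a _ => this a, ← Finset.sum_filter, Finset.mul_sum]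
  rw [hsum2, hfc]
  -- constants
  have hYpos : 0 < Nat.card Y := Nat.card_pos
  have hPpos : 0 < Nat.card (PoissonAux.perp Y) := Nat.card_pos
  have hmul : Nat.card (PoissonAux.perp Y) * Nat.card Y = Nat.card (K → ZMod (H * H' ^ 2)) := PoissonAux.card_perp_mul Y
  have hXcard : (Fintype.card (K → ZMod (H * H' ^ 2)) : ℝ) = (Nat.card (PoissonAux.perp Y) : ℝ) * (Nat.card Y : ℝ) := by
    rw [← Nat.card_eq_fintype_card]
    exact_mod_cast hmul.symm
  have hreal : (Real.sqrt (Nat.card (PoissonAux.perp Y)))⁻¹ * ((Real.sqrt (Fintype.card (K → ZMod (H * H' ^ 2))))⁻¹ *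
      (Nat.card (PoissonAux.perp Y) : ℝ)) = (Real.sqrt (Nat.card Y))⁻¹ := by
    rw [hXcard, Real.sqrt_mul (Nat.cast_nonneg _)]
    have h1 : Real.sqrt (Nat.card (PoissonAux.perp Y)) ≠ 0 :=
      ne_of_gt (Real.sqrt_pos.2 (by exact_mod_cast hPpos))
    have h2 : Real.sqrt (Nat.card Y) ≠ 0 :=
      ne_of_gt (Real.sqrt_pos.2 (by exact_mod_cast hYpos))
    have h3 : Real.sqrt (Nat.card (PoissonAux.perp Y)) * Real.sqrt (Nat.card (PoissonAux.perp Y)) = (Nat.card (PoissonAux.perp Y) : ℝ) :=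
      Real.mul_self_sqrt (Nat.cast_nonneg _)
    field_simp
    rw [Real.sq_sqrt (Nat.cast_nonneg _)]
  have hC : ((Real.sqrt (Nat.card (PoissonAux.perp Y)) : ℝ) : ℂ)⁻¹ *
      (eps0 H H' K * (Nat.card (PoissonAux.perp Y) : ℂ)) = ((Real.sqrt (Nat.card Y) : ℝ) : ℂ)⁻¹ := by
    rw [eps0]
    exact_mod_cast hreal
  rw [← mul_assoc, hC]
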